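/- For every integer Δ ≥ 3, the iterated GHZ problem 𝒫_Δ is a strengthening of the problem Π_{0,Δ}: the white constraint of 𝒫_Δ is a proper subset of the white constraint of Π_{0,Δ}, and the black constraint of 𝒫_Δ is a proper subset of the black constraint of Π_{0,Δ}. Consequently, any solution of 𝒫_Δ is also a solution of Π_{0,Δ}. -/
import Mathlib


/-- A two-bit label: the first component is the input bit, the second the output bit. -/
abbrev TwoBit := Bool × Bool

def b00 : TwoBit := (false, false)
def b01 : TwoBit := (false, true)
def b10 : TwoBit := (true, false)
def b11 : TwoBit := (true, true)

/-- The 22 maximal bit triples. -/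
def bitTriples : List (Fin 3 → Set TwoBit) :=
  [ ![{b00, b10, b11}, {b00}, {b00}],
    ![{b01, b10, b11}, {b00}, {b01}],
    ![{b00, b10, b11}, {b01}, {b01}],
    ![{b00, b01, b11}, {b00}, {b10}],
    ![{b00, b01, b10}, {b00}, {b11}],
    ![{b00, b01, b10}, {b01}, {b10}],
    ![{b00, b01, b11}, {b01}, {b11}],
    ![{b01, b10, b11}, {b10}, {b10}],
    ![{b00, b10, b11}, {b10}, {b11}],
    ![{b01, b10, b11}, {b11}, {b11}],
    ![{b00, b10}, {b00}, {b00, b11}],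
    ![{b01, b11}, {b00}, {b01, b10}],
    ![{b00, b10}, {b01}, {b01, b10}],
    ![{b01, b11}, {b00, b11}, {b01}],
    ![{b00, b10}, {b01, b11}, {b10}],
    ![{b11}, {b00, b10}, {b00, b10}],
    ![{b10}, {b01, b10}, {b01, b10}],
    ![{b10}, {b00, b11}, {b00, b11}],
    ![{b00, b11}, {b01, b10}, {b11}],
    ![{b11}, {b01, b11}, {b01, b11}],
    ![{b10, b11}, {b00, b01}, {b00, b01}],
    ![{b10, b11}, {b10, b11}, {b10, b11}] ]

/-- Labels indexed by a color subscript `j`: EE_j, MM_j, MY_j^y, XM_j^x, XY_j^{x,y}. -/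
inductive GLab where
  | EE : ℕ → GLab
  | MM : ℕ → GLab
  | MY : ℕ → Bool → GLab
  | XM : ℕ → Bool → GLab
  | XY : ℕ → Bool → Bool → GLab
deriving DecidableEq

/-- The label at color `j` of the "strikethrough" white configuration of Π_{0,Δ} with
parameters `a < b` and bit vector `y`. -/
def strikeLabel (a b : ℕ) (y : ℕ → Bool) (j : ℕ) : GLab :=
  if j < a then GLab.MM j
  else if j = a then GLab.MY a (y a)
  else if j < b then GLab.XY j (y (j - 1)) (y j)
  else if j = b then GLab.XM b (y (b - 1))
  else GLab.MM j

/-- The white constraint 𝒩_{0,Δ} of Π_{0,Δ}: (a) for all `1 ≤ a < b ≤ Δ+1` with `b ≠ Δ`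
and all bit vectors, the strikethrough configuration; (b) for each `1 ≤ a ≤ Δ−1`,
the configuration with `EE_a` at color `a` and `MM_j` elsewhere. -/
def whiteN0 (Δ : ℕ) : Set (Multiset GLab) :=
  {C | ∃ a b : ℕ, ∃ y : ℕ → Bool, 1 ≤ a ∧ a < b ∧ b ≤ Δ + 1 ∧ b ≠ Δ ∧
      C = (Finset.Icc 1 Δ).val.map (strikeLabel a b y)} ∪
  {C | ∃ a : ℕ, 1 ≤ a ∧ a ≤ Δ - 1 ∧
      C = (Finset.Icc 1 Δ).val.map (fun j => if j = a then GLab.EE a else GLab.MM j)}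

/-- The set of size-3 multisets represented by a condensed configuration. -/
def gpicks (D : Fin 3 → Set GLab) : Set (Multiset GLab) :=
  {C | ∃ l₁ ∈ D 0, ∃ l₂ ∈ D 1, ∃ l₃ ∈ D 2, C = ({l₁, l₂, l₃} : Multiset GLab)}

/-- The two condensed configurations of the color-1 constraint of Π_{0,Δ}. -/
def cond1G : List (Fin 3 → Set GLab) :=
  [ ![{GLab.EE 1, GLab.MM 1, GLab.MY 1 false, GLab.MY 1 true},
      {GLab.MM 1}, {GLab.MM 1, GLab.MY 1 false}],
    ![{GLab.MM 1, GLab.MY 1 false}, {GLab.MM 1, GLab.MY 1 false},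
      {GLab.MM 1, GLab.MY 1 true}] ]

/-- The present-color augmentation of a set of two-bit labels, at color `j`: replace each
two-bit label `xy` by `XY_j^{x,y}`; add `XM_j^x` if both `XY_j^{x,0}` and `XY_j^{x,1}` are
present; add `MY_j^y` if both `XY_j^{0,y}` and `XY_j^{1,y}` are present; always add
`MM_j`. -/
def augP (j : ℕ) (T : Set TwoBit) : Set GLab :=
  {GLab.MM j} ∪ {l | ∃ x y, (x, y) ∈ T ∧ l = GLab.XY j x y}
    ∪ {l | ∃ x, (x, false) ∈ T ∧ (x, true) ∈ T ∧ l = GLab.XM j x}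
    ∪ {l | ∃ y, (false, y) ∈ T ∧ (true, y) ∈ T ∧ l = GLab.MY j y}

/-- The set Λ_p of present-color labels at color `j`. -/
def LamP (j : ℕ) : Set GLab :=
  {l | l = GLab.EE j ∨ l = GLab.MM j ∨ (∃ y, l = GLab.MY j y) ∨
    (∃ x, l = GLab.XM j x) ∨ (∃ x y, l = GLab.XY j x y)}

/-- The condensed configurations of the present-color constraint ℰ_p at color `j`. -/
def condPG (j : ℕ) : List (Fin 3 → Set GLab) :=
  bitTriples.map (fun T => fun i => augP j (T i)) ++ [![{GLab.MM j}, LamP j, LamP j]]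

/-- The special-color augmentation at color `j` (present-color augmentation after
deleting EE, XM0, XM1). -/
def augSp (j : ℕ) (T : Set TwoBit) : Set GLab :=
  {GLab.MM j} ∪ {l | ∃ x y, (x, y) ∈ T ∧ l = GLab.XY j x y}
    ∪ {l | ∃ y, (false, y) ∈ T ∧ (true, y) ∈ T ∧ l = GLab.MY j y}

/-- The set Λ_s of special-color labels at color `j`. -/
def LamS (j : ℕ) : Set GLab :=
  {l | l = GLab.MM j ∨ (∃ y, l = GLab.MY j y) ∨ (∃ x y, l = GLab.XY j x y)}

/-- The condensed configurations of the special-color constraint ℰ_s at color `j`. -/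
def condSG (j : ℕ) : List (Fin 3 → Set GLab) :=
  bitTriples.map (fun T => fun i => augSp j (T i)) ++ [![{GLab.MM j}, LamS j, LamS j]]

/-- The black constraint ℰ_{0,Δ} of Π_{0,Δ}: color 1 via `cond1G`, colors 2 ≤ j ≤ Δ−1 via
the present-color constraint, color Δ via the special-color constraint. -/
def blackE0 (Δ : ℕ) : Set (Multiset GLab) :=
  {C | ∃ D ∈ cond1G, C ∈ gpicks D} ∪
  {C | ∃ j : ℕ, 2 ≤ j ∧ j ≤ Δ - 1 ∧ ∃ D ∈ condPG j, C ∈ gpicks D} ∪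
  {C | ∃ D ∈ condSG Δ, C ∈ gpicks D}

/-- The white constraint of the iterated GHZ problem 𝒫_Δ: for each bit vector
`(y₁,…,y_Δ)`, the configuration {MY₁^{y₁}, XY₂^{y₁,y₂}, …, XY_Δ^{y_{Δ−1},y_Δ}}. -/
def whiteP (Δ : ℕ) : Set (Multiset GLab) :=
  {C | ∃ y : ℕ → Bool,
    C = (Finset.Icc 1 Δ).val.map
      (fun j => if j = 1 then GLab.MY 1 (y 1) else GLab.XY j (y (j - 1)) (y j))}

/-- The black constraint of the iterated GHZ problem 𝒫_Δ: the multiset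
{MY₁⁰, MY₁⁰, MY₁¹}, together with, for each 2 ≤ j ≤ Δ, all multisets
{XY_j^{x₁,y₁}, XY_j^{x₂,y₂}, XY_j^{x₃,y₃}} such that if `x₁ + x₂ + x₃` is even then
`y₁ ⊕ y₂ ⊕ y₃ = x₁ ∨ x₂ ∨ x₃`. -/
def blackP (Δ : ℕ) : Set (Multiset GLab) :=
  {({GLab.MY 1 false, GLab.MY 1 false, GLab.MY 1 true} : Multiset GLab)} ∪
  {C | ∃ j : ℕ, 2 ≤ j ∧ j ≤ Δ ∧ ∃ x₁ y₁ x₂ y₂ x₃ y₃ : Bool,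
      ((x₁.toNat + x₂.toNat + x₃.toNat) % 2 = 0 →
        Bool.xor y₁ (Bool.xor y₂ y₃) = (x₁ || x₂ || x₃)) ∧
      C = ({GLab.XY j x₁ y₁, GLab.XY j x₂ y₂, GLab.XY j x₃ y₃} : Multiset GLab)}

lemma cover (x₁ y₁ x₂ y₂ x₃ y₃ : Bool)
    (h : (x₁.toNat + x₂.toNat + x₃.toNat) % 2 = 0 →
        Bool.xor y₁ (Bool.xor y₂ y₃) = (x₁ || x₂ || x₃)) :
    ∃ T ∈ bitTriples, ∃ q₁ ∈ T 0, ∃ q₂ ∈ T 1, ∃ q₃ ∈ T 2,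
      ({(x₁, y₁), (x₂, y₂), (x₃, y₃)} : Multiset TwoBit) = {q₁, q₂, q₃} := by
  revert h
  cases x₁ <;> cases y₁ <;> cases x₂ <;> cases y₂ <;> cases x₃ <;> cases y₃ <;> intro h
  · exact ⟨![{b00, b10, b11}, {b00}, {b00}], by simp [bitTriples], b00, Or.inl rfl, b00, rfl, b00, rfl, by decide⟩
  · exact absurd (h rfl) (by decide)
  · exact ⟨![{b00, b10, b11}, {b00}, {b00}], by simp [bitTriples], b10, Or.inr (Or.inl rfl), b00, rfl, b00, rfl, by decide⟩
  · exact ⟨![{b00, b10, b11}, {b00}, {b00}], by simp [bitTriples], b11, Or.inr (Or.inr (rfl)), b00, rfl, b00, rfl, by decide⟩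
  · exact absurd (h rfl) (by decide)
  · exact ⟨![{b01, b10, b11}, {b00}, {b01}], by simp [bitTriples], b01, Or.inl rfl, b00, rfl, b01, rfl, by decide⟩
  · exact ⟨![{b01, b10, b11}, {b00}, {b01}], by simp [bitTriples], b10, Or.inr (Or.inl rfl), b00, rfl, b01, rfl, by decide⟩
  · exact ⟨![{b01, b10, b11}, {b00}, {b01}], by simp [bitTriples], b11, Or.inr (Or.inr (rfl)), b00, rfl, b01, rfl, by decide⟩
  · exact ⟨![{b00, b10, b11}, {b00}, {b00}], by simp [bitTriples], b10, Or.inr (Or.inl rfl), b00, rfl, b00, rfl, by decide⟩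
  · exact ⟨![{b01, b10, b11}, {b00}, {b01}], by simp [bitTriples], b10, Or.inr (Or.inl rfl), b00, rfl, b01, rfl, by decide⟩
  · exact absurd (h rfl) (by decide)
  · exact ⟨![{b00, b01, b11}, {b00}, {b10}], by simp [bitTriples], b11, Or.inr (Or.inr (rfl)), b00, rfl, b10, rfl, by decide⟩
  · exact ⟨![{b00, b10, b11}, {b00}, {b00}], by simp [bitTriples], b11, Or.inr (Or.inr (rfl)), b00, rfl, b00, rfl, by decide⟩
  · exact ⟨![{b01, b10, b11}, {b00}, {b01}], by simp [bitTriples], b11, Or.inr (Or.inr (rfl)), b00, rfl, b01, rfl, by decide⟩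
  · exact ⟨![{b00, b01, b11}, {b00}, {b10}], by simp [bitTriples], b11, Or.inr (Or.inr (rfl)), b00, rfl, b10, rfl, by decide⟩
  · exact absurd (h rfl) (by decide)
  · exact absurd (h rfl) (by decide)
  · exact ⟨![{b01, b10, b11}, {b00}, {b01}], by simp [bitTriples], b01, Or.inl rfl, b00, rfl, b01, rfl, by decide⟩
  · exact ⟨![{b01, b10, b11}, {b00}, {b01}], by simp [bitTriples], b10, Or.inr (Or.inl rfl), b00, rfl, b01, rfl, by decide⟩
  · exact ⟨![{b01, b10, b11}, {b00}, {b01}], by simp [bitTriples], b11, Or.inr (Or.inr (rfl)), b00, rfl, b01, rfl, by decide⟩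
  · exact ⟨![{b01, b10, b11}, {b00}, {b01}], by simp [bitTriples], b01, Or.inl rfl, b00, rfl, b01, rfl, by decide⟩
  · exact absurd (h rfl) (by decide)
  · exact ⟨![{b00, b10, b11}, {b01}, {b01}], by simp [bitTriples], b10, Or.inr (Or.inl rfl), b01, rfl, b01, rfl, by decide⟩
  · exact ⟨![{b00, b10, b11}, {b01}, {b01}], by simp [bitTriples], b11, Or.inr (Or.inr (rfl)), b01, rfl, b01, rfl, by decide⟩
  · exact ⟨![{b01, b10, b11}, {b00}, {b01}], by simp [bitTriples], b10, Or.inr (Or.inl rfl), b00, rfl, b01, rfl, by decide⟩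
  · exact ⟨![{b00, b10, b11}, {b01}, {b01}], by simp [bitTriples], b10, Or.inr (Or.inl rfl), b01, rfl, b01, rfl, by decide⟩
  · exact ⟨![{b00, b01, b10}, {b01}, {b10}], by simp [bitTriples], b10, Or.inr (Or.inr (rfl)), b01, rfl, b10, rfl, by decide⟩
  · exact absurd (h rfl) (by decide)
  · exact ⟨![{b01, b10, b11}, {b00}, {b01}], by simp [bitTriples], b11, Or.inr (Or.inr (rfl)), b00, rfl, b01, rfl, by decide⟩
  · exact ⟨![{b00, b10, b11}, {b01}, {b01}], by simp [bitTriples], b11, Or.inr (Or.inr (rfl)), b01, rfl, b01, rfl, by decide⟩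
  · exact absurd (h rfl) (by decide)
  · exact ⟨![{b00, b01, b11}, {b01}, {b11}], by simp [bitTriples], b11, Or.inr (Or.inr (rfl)), b01, rfl, b11, rfl, by decide⟩
  · exact ⟨![{b00, b10, b11}, {b00}, {b00}], by simp [bitTriples], b10, Or.inr (Or.inl rfl), b00, rfl, b00, rfl, by decide⟩
  · exact ⟨![{b01, b10, b11}, {b00}, {b01}], by simp [bitTriples], b10, Or.inr (Or.inl rfl), b00, rfl, b01, rfl, by decide⟩
  · exact absurd (h rfl) (by decide)
  · exact ⟨![{b00, b01, b11}, {b00}, {b10}], by simp [bitTriples], b11, Or.inr (Or.inr (rfl)), b00, rfl, b10, rfl, by decide⟩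
  · exact ⟨![{b01, b10, b11}, {b00}, {b01}], by simp [bitTriples], b10, Or.inr (Or.inl rfl), b00, rfl, b01, rfl, by decide⟩
  · exact ⟨![{b00, b10, b11}, {b01}, {b01}], by simp [bitTriples], b10, Or.inr (Or.inl rfl), b01, rfl, b01, rfl, by decide⟩
  · exact ⟨![{b00, b01, b10}, {b01}, {b10}], by simp [bitTriples], b10, Or.inr (Or.inr (rfl)), b01, rfl, b10, rfl, by decide⟩
  · exact absurd (h rfl) (by decide)
  · exact absurd (h rfl) (by decide)
  · exact ⟨![{b00, b01, b10}, {b01}, {b10}], by simp [bitTriples], b10, Or.inr (Or.inr (rfl)), b01, rfl, b10, rfl, by decide⟩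
  · exact ⟨![{b01, b10, b11}, {b10}, {b10}], by simp [bitTriples], b10, Or.inr (Or.inl rfl), b10, rfl, b10, rfl, by decide⟩
  · exact ⟨![{b01, b10, b11}, {b10}, {b10}], by simp [bitTriples], b11, Or.inr (Or.inr (rfl)), b10, rfl, b10, rfl, by decide⟩
  · exact ⟨![{b00, b01, b11}, {b00}, {b10}], by simp [bitTriples], b11, Or.inr (Or.inr (rfl)), b00, rfl, b10, rfl, by decide⟩
  · exact absurd (h rfl) (by decide)
  · exact ⟨![{b01, b10, b11}, {b10}, {b10}], by simp [bitTriples], b11, Or.inr (Or.inr (rfl)), b10, rfl, b10, rfl, by decide⟩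
  · exact ⟨![{b00, b10, b11}, {b10}, {b11}], by simp [bitTriples], b11, Or.inr (Or.inr (rfl)), b10, rfl, b11, rfl, by decide⟩
  · exact ⟨![{b00, b10, b11}, {b00}, {b00}], by simp [bitTriples], b11, Or.inr (Or.inr (rfl)), b00, rfl, b00, rfl, by decide⟩
  · exact ⟨![{b01, b10, b11}, {b00}, {b01}], by simp [bitTriples], b11, Or.inr (Or.inr (rfl)), b00, rfl, b01, rfl, by decide⟩
  · exact ⟨![{b00, b01, b11}, {b00}, {b10}], by simp [bitTriples], b11, Or.inr (Or.inr (rfl)), b00, rfl, b10, rfl, by decide⟩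
  · exact absurd (h rfl) (by decide)
  · exact ⟨![{b01, b10, b11}, {b00}, {b01}], by simp [bitTriples], b11, Or.inr (Or.inr (rfl)), b00, rfl, b01, rfl, by decide⟩
  · exact ⟨![{b00, b10, b11}, {b01}, {b01}], by simp [bitTriples], b11, Or.inr (Or.inr (rfl)), b01, rfl, b01, rfl, by decide⟩
  · exact absurd (h rfl) (by decide)
  · exact ⟨![{b00, b01, b11}, {b01}, {b11}], by simp [bitTriples], b11, Or.inr (Or.inr (rfl)), b01, rfl, b11, rfl, by decide⟩
  · exact ⟨![{b00, b01, b11}, {b00}, {b10}], by simp [bitTriples], b11, Or.inr (Or.inr (rfl)), b00, rfl, b10, rfl, by decide⟩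
  · exact absurd (h rfl) (by decide)
  · exact ⟨![{b01, b10, b11}, {b10}, {b10}], by simp [bitTriples], b11, Or.inr (Or.inr (rfl)), b10, rfl, b10, rfl, by decide⟩
  · exact ⟨![{b00, b10, b11}, {b10}, {b11}], by simp [bitTriples], b11, Or.inr (Or.inr (rfl)), b10, rfl, b11, rfl, by decide⟩
  · exact absurd (h rfl) (by decide)
  · exact ⟨![{b00, b01, b11}, {b01}, {b11}], by simp [bitTriples], b11, Or.inr (Or.inr (rfl)), b01, rfl, b11, rfl, by decide⟩
  · exact ⟨![{b00, b10, b11}, {b10}, {b11}], by simp [bitTriples], b11, Or.inr (Or.inr (rfl)), b10, rfl, b11, rfl, by decide⟩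
  · exact ⟨![{b01, b10, b11}, {b11}, {b11}], by simp [bitTriples], b11, Or.inr (Or.inr (rfl)), b11, rfl, b11, rfl, by decide⟩

lemma whiteP_subset (Δ : ℕ) (hΔ : 3 ≤ Δ) : whiteP Δ ⊆ whiteN0 Δ := by
  rintro C ⟨y, rfl⟩
  left
  refine ⟨1, Δ + 1, y, le_refl 1, by omega, by omega, by omega, ?_⟩
  refine Multiset.map_congr rfl (fun j hj => ?_)
  have hj' : 1 ≤ j ∧ j ≤ Δ := Finset.mem_Icc.mp hj
  by_cases h1 : j = 1
  · subst h1; simp [strikeLabel]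
  · simp only [strikeLabel]
    split_ifs <;> first | rfl | omega

lemma white_witness (Δ : ℕ) (hΔ : 3 ≤ Δ) :
    ((Finset.Icc 1 Δ).val.map (fun j => if j = 1 then GLab.EE 1 else GLab.MM j))
      ∈ whiteN0 Δ ∧
    ((Finset.Icc 1 Δ).val.map (fun j => if j = 1 then GLab.EE 1 else GLab.MM j))
      ∉ whiteP Δ := by
  constructor
  · right; exact ⟨1, le_refl 1, by omega, rfl⟩
  · rintro ⟨y, hy⟩
    have hmem : GLab.EE 1 ∈
        (Finset.Icc 1 Δ).val.map (fun j => if j = 1 then GLab.EE 1 else GLab.MM j) :=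
      Multiset.mem_map.mpr ⟨1, by simp [Finset.mem_Icc]; omega, by simp⟩
    rw [hy] at hmem
    obtain ⟨j, hj, hjeq⟩ := Multiset.mem_map.mp hmem
    split at hjeq <;> simp at hjeq

lemma blackP_subset (Δ : ℕ) (hΔ : 3 ≤ Δ) : blackP Δ ⊆ blackE0 Δ := by
  rintro C (hC | ⟨j, hj2, hjΔ, x₁, y₁, x₂, y₂, x₃, y₃, hcond, rfl⟩)
  · refine Or.inl (Or.inl ⟨![{GLab.MM 1, GLab.MY 1 false}, {GLab.MM 1, GLab.MY 1 false},
      {GLab.MM 1, GLab.MY 1 true}], by simp [cond1G], ?_⟩)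
    exact ⟨GLab.MY 1 false, Or.inr rfl, GLab.MY 1 false, Or.inr rfl,
      GLab.MY 1 true, Or.inr rfl, hC⟩
  · obtain ⟨T, hT, q₁, h1, q₂, h2, q₃, h3, heq⟩ := cover x₁ y₁ x₂ y₂ x₃ y₃ hcond
    have hmap : ({GLab.XY j x₁ y₁, GLab.XY j x₂ y₂, GLab.XY j x₃ y₃} : Multiset GLab)
        = {GLab.XY j q₁.1 q₁.2, GLab.XY j q₂.1 q₂.2, GLab.XY j q₃.1 q₃.2} := by
      have := congrArg (Multiset.map (fun p : TwoBit => GLab.XY j p.1 p.2)) heq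
      simpa using this
    have h1' : (q₁.1, q₁.2) ∈ T 0 := by simpa using h1
    have h2' : (q₂.1, q₂.2) ∈ T 1 := by simpa using h2
    have h3' : (q₃.1, q₃.2) ∈ T 2 := by simpa using h3
    by_cases hjD : j = Δ
    · subst hjD
      refine Or.inr ⟨fun i => augSp j (T i),
        List.mem_append_left _ (List.mem_map.mpr ⟨T, hT, rfl⟩), ?_⟩
      exact ⟨GLab.XY j q₁.1 q₁.2, Or.inl (Or.inr ⟨q₁.1, q₁.2, h1', rfl⟩),
        GLab.XY j q₂.1 q₂.2, Or.inl (Or.inr ⟨q₂.1, q₂.2, h2', rfl⟩),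
        GLab.XY j q₃.1 q₃.2, Or.inl (Or.inr ⟨q₃.1, q₃.2, h3', rfl⟩), hmap⟩
    · refine Or.inl (Or.inr ⟨j, hj2, by omega, fun i => augP j (T i),
        List.mem_append_left _ (List.mem_map.mpr ⟨T, hT, rfl⟩), ?_⟩)
      exact ⟨GLab.XY j q₁.1 q₁.2, Or.inl (Or.inl (Or.inr ⟨q₁.1, q₁.2, h1', rfl⟩)),
        GLab.XY j q₂.1 q₂.2, Or.inl (Or.inl (Or.inr ⟨q₂.1, q₂.2, h2', rfl⟩)),
        GLab.XY j q₃.1 q₃.2, Or.inl (Or.inl (Or.inr ⟨q₃.1, q₃.2, h3', rfl⟩)), hmap⟩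

lemma black_witness (Δ : ℕ) (hΔ : 3 ≤ Δ) :
    ({GLab.MM 1, GLab.MM 1, GLab.MM 1} : Multiset GLab) ∈ blackE0 Δ ∧
    ({GLab.MM 1, GLab.MM 1, GLab.MM 1} : Multiset GLab) ∉ blackP Δ := by
  constructor
  · refine Or.inl (Or.inl ⟨![{GLab.EE 1, GLab.MM 1, GLab.MY 1 false, GLab.MY 1 true},
      {GLab.MM 1}, {GLab.MM 1, GLab.MY 1 false}], by simp [cond1G], ?_⟩)
    exact ⟨GLab.MM 1, Or.inr (Or.inl rfl), GLab.MM 1, rfl, GLab.MM 1, Or.inl rfl, rfl⟩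
  · rintro (h | ⟨j, _, _, x₁, y₁, x₂, y₂, x₃, y₃, _, heq⟩)
    · exact absurd h (by decide)
    · have hmem : GLab.MM 1 ∈ ({GLab.MM 1, GLab.MM 1, GLab.MM 1} : Multiset GLab) := by
        simp
      rw [heq] at hmem
      simp at hmem

/-- **The iterated GHZ problem 𝒫_Δ is a strengthening of Π_{0,Δ}**: its white constraint
is a proper subset of the white constraint of Π_{0,Δ}, and its black constraint is a
proper subset of the black constraint of Π_{0,Δ}. (Consequently, any solution of 𝒫_Δ is
also a solution of Π_{0,Δ}.) -/
theorem iteratedGHZ_strengthens_Pi0 (Δ : ℕ) (hΔ : 3 ≤ Δ) :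
    whiteP Δ ⊂ whiteN0 Δ ∧ blackP Δ ⊂ blackE0 Δ := by
  constructor
  · rw [Set.ssubset_iff_of_subset (whiteP_subset Δ hΔ)]
    exact ⟨_, (white_witness Δ hΔ).1, (white_witness Δ hΔ).2⟩
  · rw [Set.ssubset_iff_of_subset (blackP_subset Δ hΔ)]
    exact ⟨_, (black_witness Δ hΔ).1, (black_witness Δ hΔ).2⟩
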